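/- Let C be a real symmetric positive definite 2N×2N matrix. Then Γ(C) and −Γ(C) have the same characteristic polynomial; equivalently, the characteristic polynomial of Γ(C) is an even polynomial, so the eigenvalues of Γ(C) occur in pairs ±λ with equal multiplicities. -/

import Mathlib

open Matrix Polynomial

/-- The block matrix `J = [[0, -I],[I, 0]]`. -/
def J (N : ℕ) : Matrix (Fin N ⊕ Fin N) (Fin N ⊕ Fin N) ℝ :=
  Matrix.fromBlocks 0 (-1) 1 0

/-- The proper part `Ċ` of a real `2N × 2N` matrix `C` with blocks `[[A, B],[B′, D]]`:
`Ċ = (1/2)·[[A+D, B−B′],[B′−B, A+D]]`. -/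
noncomputable def dotPart {N : ℕ} (C : Matrix (Fin N ⊕ Fin N) (Fin N ⊕ Fin N) ℝ) :
    Matrix (Fin N ⊕ Fin N) (Fin N ⊕ Fin N) ℝ :=
  (1/2 : ℝ) • Matrix.fromBlocks (C.toBlocks₁₁ + C.toBlocks₂₂) (C.toBlocks₁₂ - C.toBlocks₂₁)
    (C.toBlocks₂₁ - C.toBlocks₁₂) (C.toBlocks₁₁ + C.toBlocks₂₂)

/-- The improper part `C̈ = C − Ċ`. -/
noncomputable def ddotPart {N : ℕ} (C : Matrix (Fin N ⊕ Fin N) (Fin N ⊕ Fin N) ℝ) :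
    Matrix (Fin N ⊕ Fin N) (Fin N ⊕ Fin N) ℝ :=
  C - dotPart C

/-- The square root of a positive semidefinite matrix, as `Matrix.PosSemidef.sqrt` was defined
in the older Mathlib (since removed). -/
noncomputable def Matrix.PosSemidef.sqrt {n : Type*} [Fintype n] [DecidableEq n]
    {A : Matrix n n ℝ} (hA : A.PosSemidef) : Matrix n n ℝ :=
  (hA.1.eigenvectorUnitary : Matrix n n ℝ) * diagonal (Real.sqrt ∘ hA.1.eigenvalues) *
    (star hA.1.eigenvectorUnitary : Matrix n n ℝ)

/-- `Γ(C) = Ċ^{-1/2} C̈ Ċ^{-1/2}`, where `Ċ^{1/2}` is the (unique) positive semidefinite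
(hence, as `Ċ` is positive definite, the unique symmetric positive definite) square root
of `Ċ`, given a proof `h` that `Ċ` is positive definite. -/
noncomputable def Gamma {N : ℕ} (C : Matrix (Fin N ⊕ Fin N) (Fin N ⊕ Fin N) ℝ)
    (h : (dotPart C).PosDef) : Matrix (Fin N ⊕ Fin N) (Fin N ⊕ Fin N) ℝ :=
  (h.posSemidef.sqrt)⁻¹ * ddotPart C * (h.posSemidef.sqrt)⁻¹

/-! `J` commutes with `Ċ`, hence with its square root `Ċ^{1/2}` (the square root is a continuous
function of `Ċ`), and anticommutes with `C̈`. Therefore `J Γ(C) J⁻¹ = -Γ(C)`, and similar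
matrices have the same characteristic polynomial. -/

theorem Commute.nonsing_inv_right {n α : Type*} [Fintype n] [DecidableEq n] [CommRing α]
    {A B : Matrix n n α} (h : Commute A B) : Commute A B⁻¹ := by
  by_cases hB : IsUnit B
  · obtain ⟨u, rfl⟩ := hB
    rw [← coe_units_inv]
    exact h.units_inv_right
  · rw [nonsing_inv_eq_ringInverse, Ring.inverse_non_unit _ hB]
    exact Commute.zero_right A

theorem Matrix.charpoly_eq_of_semiconjBy {n R : Type*} [Fintype n] [DecidableEq n] [CommRing R]
    {P M M' : Matrix n n R} (hP : IsUnit P) (h : SemiconjBy P M M') :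
    M.charpoly = M'.charpoly := by
  obtain ⟨u, rfl⟩ := hP
  rw [← charpoly_units_conj u M, h.eq, Matrix.mul_assoc, ← coe_units_inv, Units.mul_inv,
    Matrix.mul_one]

namespace Matrix.PosSemidef

open scoped MatrixOrder

variable {n : Type*} [Fintype n] [DecidableEq n]

theorem sqrt_eq_cfcSqrt {A : Matrix n n ℝ} (hA : A.PosSemidef) : hA.sqrt = CFC.sqrt A := by
  rw [CFC.sqrt_eq_cfc, cfc_nnreal_eq_real _ A, hA.1.cfc_eq]
  simp only [IsHermitian.cfc, Matrix.PosSemidef.sqrt, Unitary.conjStarAlgAut_apply]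
  congr 3
  funext i
  simp [hA.eigenvalues_nonneg i]

theorem commute_sqrt_left {A B : Matrix n n ℝ} (hA : A.PosSemidef) (h : Commute A B) :
    Commute hA.sqrt B := by
  rw [sqrt_eq_cfcSqrt, CFC.sqrt_eq_cfc]
  exact h.cfc_nnreal _

end Matrix.PosSemidef

section J

variable {N : ℕ}

theorem isUnit_J : IsUnit (_root_.J N) :=
  (isUnit_iff_isUnit_det _).mpr (Matrix.isUnit_det_J (Fin N) ℝ)

theorem commute_J_fromBlocks (P Q : Matrix (Fin N) (Fin N) ℝ) :
    Commute (_root_.J N) (fromBlocks P Q (-Q) P) := by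
  simp [Commute, SemiconjBy, _root_.J, fromBlocks_multiply]

theorem semiconjBy_J_fromBlocks (P Q : Matrix (Fin N) (Fin N) ℝ) :
    SemiconjBy (_root_.J N) (fromBlocks P Q Q (-P)) (-fromBlocks P Q Q (-P)) := by
  simp [SemiconjBy, _root_.J, fromBlocks_multiply, fromBlocks_neg]

theorem ddotPart_eq_fromBlocks (C : Matrix (Fin N ⊕ Fin N) (Fin N ⊕ Fin N) ℝ) :
    ddotPart C = (1/2 : ℝ) • fromBlocks (C.toBlocks₁₁ - C.toBlocks₂₂)
      (C.toBlocks₁₂ + C.toBlocks₂₁) (C.toBlocks₁₂ + C.toBlocks₂₁)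
      (-(C.toBlocks₁₁ - C.toBlocks₂₂)) := by
  rw [ddotPart, dotPart, sub_eq_add_neg]
  nth_rewrite 1 [← fromBlocks_toBlocks C]
  rw [← neg_smul, fromBlocks_smul, fromBlocks_smul, fromBlocks_add]
  congr 1 <;> module

theorem commute_J_dotPart (C : Matrix (Fin N ⊕ Fin N) (Fin N ⊕ Fin N) ℝ) :
    Commute (_root_.J N) (dotPart C) := by
  have h := commute_J_fromBlocks (C.toBlocks₁₁ + C.toBlocks₂₂) (C.toBlocks₁₂ - C.toBlocks₂₁)
  rw [neg_sub] at h
  exact h.smul_right _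

theorem semiconjBy_J_ddotPart (C : Matrix (Fin N ⊕ Fin N) (Fin N ⊕ Fin N) ℝ) :
    SemiconjBy (_root_.J N) (ddotPart C) (-ddotPart C) := by
  rw [ddotPart_eq_fromBlocks, ← smul_neg]
  exact (semiconjBy_J_fromBlocks _ _).smul_right _

theorem semiconjBy_J_Gamma (C : Matrix (Fin N ⊕ Fin N) (Fin N ⊕ Fin N) ℝ)
    (hd : (dotPart C).PosDef) : SemiconjBy (_root_.J N) (Gamma C hd) (-Gamma C hd) := by
  have hs : Commute (_root_.J N) (hd.posSemidef.sqrt)⁻¹ :=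
    (hd.posSemidef.commute_sqrt_left (commute_J_dotPart C).symm).symm.nonsing_inv_right
  have h := (hs.semiconjBy.mul_right (semiconjBy_J_ddotPart C)).mul_right hs.semiconjBy
  rwa [Matrix.mul_neg, Matrix.neg_mul] at h

end J

theorem statement4_general (N : ℕ) (C : Matrix (Fin N ⊕ Fin N) (Fin N ⊕ Fin N) ℝ)
    (hd : (dotPart C).PosDef) :
    (Gamma C hd).charpoly = (-(Gamma C hd)).charpoly :=
  charpoly_eq_of_semiconjBy isUnit_J (semiconjBy_J_Gamma C hd)

theorem statement4 (N : ℕ) (hN : 1 ≤ N) (C : Matrix (Fin N ⊕ Fin N) (Fin N ⊕ Fin N) ℝ)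
    (hC : C.PosDef) (hd : (dotPart C).PosDef) :
    (Gamma C hd).charpoly = (-(Gamma C hd)).charpoly :=
  statement4_general N C hd
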